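/- A curve c : I → R^n defined on an open interval is affine (i.e., of the form c(t) = a + tb) if and only if it is locally odd: for every b in I there exists t(b) > 0 such that c(b+t) − c(b) = c(b) − c(b−t) for all |t| < t(b). -/

import Mathlib

/-!
A locally odd real function obeys a maximum principle on a compact interval: at the rightmost
point `x₀` where the maximum `M` is attained, `f (x₀ + t) < M` and `f (x₀ - t) ≤ M` for small
`t > 0`, which is incompatible with `f (x₀ + t) + f (x₀ - t) = 2 M`, so `x₀` is an endpoint.
Applied through continuous linear functionals to `c` minus its chord between two points, this
shows that `c` agrees with the chord, i.e. is affine on every compact subinterval, and two such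
affine pieces sharing two points coincide.
-/

open Set Filter Topology

variable {E : Type*}

section AddCommGroup

variable [AddCommGroup E]

def IsLocallyOddAt (f : ℝ → E) (x : ℝ) : Prop :=
  ∀ᶠ t in 𝓝 0, f (x + t) - f x = f x - f (x - t)

theorem isLocallyOddAt_iff {f : ℝ → E} {x : ℝ} :
    IsLocallyOddAt f x ↔ ∃ ε > 0, ∀ t : ℝ, |t| < ε → f (x + t) - f x = f x - f (x - t) := by
  simp only [IsLocallyOddAt, Metric.eventually_nhds_iff, Real.dist_0_eq_abs]

theorem IsLocallyOddAt.sub {f g : ℝ → E} {x : ℝ} (hf : IsLocallyOddAt f x)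
    (hg : IsLocallyOddAt g x) : IsLocallyOddAt (f - g) x :=
  (hf.and hg).mono fun t ⟨hft, hgt⟩ => by
    simp only [Pi.sub_apply]
    rw [sub_sub_sub_comm, hft, hgt, sub_sub_sub_comm]

theorem IsLocallyOddAt.map {F 𝓕 : Type*} [AddCommGroup F] [FunLike 𝓕 E F]
    [AddMonoidHomClass 𝓕 E F] {f : ℝ → E} {x : ℝ} (hf : IsLocallyOddAt f x) (ℓ : 𝓕) :
    IsLocallyOddAt (ℓ ∘ f) x :=
  hf.mono fun t ht => by simp only [Function.comp_apply, ← map_sub, ht]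

variable [Module ℝ E]

theorem isLocallyOddAt_add_smul (p v : E) (x : ℝ) :
    IsLocallyOddAt (fun t : ℝ => p + t • v) x :=
  Eventually.of_forall fun t => by module

theorem eq_and_eq_of_add_smul_eq {p v p' v' : E} {a b : ℝ} (hab : a ≠ b)
    (ha : p + a • v = p' + a • v') (hb : p + b • v = p' + b • v') : p = p' ∧ v = v' := by
  have hv : (b - a) • (v - v') = 0 := by
    rw [smul_sub, sub_smul, sub_smul, sub_eq_zero]
    linear_combination (norm := module) hb - ha
  obtain rfl : v = v' := sub_eq_zero.1 ((smul_eq_zero.1 hv).resolve_left (sub_ne_zero.2 hab.symm))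
  exact ⟨add_right_cancel ha, rfl⟩

theorem exists_add_smul_of_forall_Icc {I : Set ℝ} {c : ℝ → E}
    (h : ∀ a ∈ I, ∀ b ∈ I, a < b → ∃ p v : E, ∀ t ∈ Icc a b, c t = p + t • v) :
    ∃ p v : E, ∀ t ∈ I, c t = p + t • v := by
  rcases I.subsingleton_or_nontrivial with hI | hI
  · rcases hI.eq_empty_or_singleton with rfl | ⟨t₀, rfl⟩
    · exact ⟨0, 0, by simp⟩
    · exact ⟨c t₀, 0, by simp⟩
  obtain ⟨a₀, ha₀, b₀, hb₀, hlt⟩ := hI.exists_lt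
  obtain ⟨p, v, hpv⟩ := h a₀ ha₀ b₀ hb₀ hlt
  refine ⟨p, v, fun t ht => ?_⟩
  obtain ⟨p', v', hpv'⟩ := h (min a₀ t) (min_rec' I ha₀ ht) (max b₀ t) (max_rec' I hb₀ ht)
    (min_le_left _ _ |>.trans_lt <| hlt.trans_le <| le_max_left _ _)
  have ha₀' : a₀ ∈ Icc (min a₀ t) (max b₀ t) := ⟨min_le_left _ _, hlt.le.trans (le_max_left _ _)⟩
  have hb₀' : b₀ ∈ Icc (min a₀ t) (max b₀ t) := ⟨(min_le_left _ _).trans hlt.le, le_max_left _ _⟩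
  obtain ⟨rfl, rfl⟩ := eq_and_eq_of_add_smul_eq hlt.ne
    ((hpv a₀ ⟨le_rfl, hlt.le⟩).symm.trans (hpv' a₀ ha₀'))
    ((hpv b₀ ⟨hlt.le, le_rfl⟩).symm.trans (hpv' b₀ hb₀'))
  exact hpv' t ⟨min_le_right _ _, le_max_right _ _⟩

end AddCommGroup

theorem ContinuousOn.le_max_of_isLocallyOddAt {f : ℝ → ℝ} {a b x : ℝ}
    (hf : ContinuousOn f (Icc a b)) (hodd : ∀ y ∈ Ioo a b, IsLocallyOddAt f y)
    (hx : x ∈ Icc a b) : f x ≤ max (f a) (f b) := by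
  obtain ⟨z, hz, hzmax⟩ := isCompact_Icc.exists_isMaxOn ⟨x, hx⟩ hf
  set K := Icc a b ∩ f ⁻¹' {f z}
  have hbdd : BddAbove K := bddAbove_Icc.mono inter_subset_left
  obtain ⟨⟨hx₀a, hx₀b⟩, hfx₀ : f (sSup K) = f z⟩ : sSup K ∈ K :=
    (hf.preimage_isClosed_of_isClosed isClosed_Icc isClosed_singleton).csSup_mem ⟨z, hz, rfl⟩ hbdd
  set x₀ := sSup K
  suffices x₀ = a ∨ x₀ = b by
    refine (hzmax hx).trans (hfx₀ ▸ ?_)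
    rcases this with h | h <;> simp [h]
  by_contra! hne
  have hx₀ : x₀ ∈ Ioo a b := ⟨hx₀a.lt_of_ne hne.1.symm, hx₀b.lt_of_ne hne.2⟩
  obtain ⟨t, hodd_t, ht₀, ht⟩ := (((hodd x₀ hx₀).filter_mono nhdsWithin_le_nhds).and
    (Ioo_mem_nhdsGT (lt_min (sub_pos.2 hx₀.2) (sub_pos.2 hx₀.1)))).exists
  rw [lt_min_iff] at ht
  have hright : x₀ + t ∈ Icc a b := ⟨by linarith, by linarith⟩
  have hleft : x₀ - t ∈ Icc a b := ⟨by linarith, by linarith⟩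
  have hright_lt : f (x₀ + t) < f z := (hzmax hright).lt_of_ne fun h =>
    (lt_add_of_pos_right x₀ ht₀).not_ge (le_csSup hbdd ⟨hright, h⟩)
  have hleft_le : f (x₀ - t) ≤ f z := hzmax hleft
  linarith

variable [NormedAddCommGroup E] [NormedSpace ℝ E]

theorem ContinuousOn.eq_zero_of_isLocallyOddAt {g : ℝ → E} {a b : ℝ}
    (hg : ContinuousOn g (Icc a b)) (hodd : ∀ y ∈ Ioo a b, IsLocallyOddAt g y)
    (ha : g a = 0) (hb : g b = 0) {x : ℝ} (hx : x ∈ Icc a b) : g x = 0 := by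
  have hle (ℓ : StrongDual ℝ E) : ℓ (g x) ≤ 0 := by
    simpa [ha, hb] using (ℓ.continuous.comp_continuousOn hg).le_max_of_isLocallyOddAt
      (fun y hy => (hodd y hy).map ℓ) hx
  exact SeparatingDual.eq_zero_of_forall_dual_eq_zero fun ℓ =>
    (hle ℓ).antisymm (by simpa using hle (-ℓ))

theorem ContinuousOn.exists_add_smul_of_isLocallyOddAt {c : ℝ → E} {a b : ℝ} (hab : a < b)
    (hc : ContinuousOn c (Icc a b)) (hodd : ∀ y ∈ Ioo a b, IsLocallyOddAt c y) :
    ∃ p v : E, ∀ t ∈ Icc a b, c t = p + t • v := by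
  set v := (b - a)⁻¹ • (c b - c a)
  refine ⟨c a - a • v, v, fun t ht => sub_eq_zero.1 ?_⟩
  refine (hc.sub (by fun_prop)).eq_zero_of_isLocallyOddAt
    (fun y hy => (hodd y hy).sub (isLocallyOddAt_add_smul _ _ y)) (by simp) ?_ ht
  rw [Pi.sub_apply, show c a - a • v + b • v = c a + (b - a) • v by module,
    smul_inv_smul₀ (sub_ne_zero.2 hab.ne'), add_sub_cancel, sub_self]

/-- Linearity criterion: a continuous curve `c : I → ℝⁿ` on an open interval `I` is
affine (of the form `c(t) = p + t v`) if and only if it is locally odd: for each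
`b ∈ I` there is `t(b) > 0` (with `(b − t(b), b + t(b)) ⊆ I`) such that
`c(b+t) − c(b) = c(b) − c(b−t)` for all `|t| < t(b)`. -/
theorem stmt_14 {n : ℕ} (I : Set ℝ) (hopen : IsOpen I) (hconn : I.OrdConnected)
    (c : ℝ → EuclideanSpace ℝ (Fin n)) (hc : ContinuousOn c I) :
    (∃ p v : EuclideanSpace ℝ (Fin n), ∀ t ∈ I, c t = p + t • v) ↔
    (∀ b ∈ I, ∃ ε > 0, Set.Ioo (b - ε) (b + ε) ⊆ I ∧
      ∀ t : ℝ, |t| < ε → c (b + t) - c b = c b - c (b - t)) := by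
  constructor
  · rintro ⟨p, v, hpv⟩ b hb
    obtain ⟨ε, hε, hball⟩ := Metric.isOpen_iff.1 hopen b hb
    refine ⟨ε, hε, Real.ball_eq_Ioo b ε ▸ hball, fun t ht => ?_⟩
    have hbt : b + t ∈ I := hball (by simpa [Real.dist_eq] using ht)
    have hbt' : b - t ∈ I := hball (by simpa [Real.dist_eq, abs_sub_comm] using ht)
    rw [hpv _ hbt, hpv _ hb, hpv _ hbt']
    module
  · intro H
    refine exists_add_smul_of_forall_Icc fun a ha b hb hab => ?_
    have hsub : Icc a b ⊆ I := hconn.out ha hb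
    refine (hc.mono hsub).exists_add_smul_of_isLocallyOddAt hab fun y hy => ?_
    obtain ⟨ε, hε, -, hodd⟩ := H y (hsub (Ioo_subset_Icc_self hy))
    exact isLocallyOddAt_iff.2 ⟨ε, hε, hodd⟩
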